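/- Let L be a symmetric nonnegative linear operator on a real inner product space, τ > 0, and suppose (φⁿ⁺¹ - φⁿ)/τ = -ωⁿ⁺¹, ωⁿ⁺¹ = Lφⁿ⁺¹ + bⁿ rⁿ⁺¹, and rⁿ⁺¹ - rⁿ = (1/2)⟨bⁿ, φⁿ⁺¹ - φⁿ⟩, where bⁿ = U(φⁿ)/√(E₁(φⁿ)). Then with modified energy Ẽ(η, r) = (1/2)⟨η, Lη⟩ + r², one has Ẽ(φⁿ⁺¹, rⁿ⁺¹) - Ẽ(φⁿ, rⁿ) + (1/2)⟨φⁿ⁺¹ - φⁿ, L(φⁿ⁺¹ - φⁿ)⟩ + (rⁿ⁺¹ - rⁿ)² = -τ⟨ωⁿ⁺¹, ωⁿ⁺¹⟩. In particular Ẽ(φⁿ⁺¹, rⁿ⁺¹) ≤ Ẽ(φⁿ, rⁿ) for any τ > 0. -/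
import Mathlib


open RealInnerProductSpace

theorem sav_energy_stability
    {V : Type*} [NormedAddCommGroup V] [InnerProductSpace ℝ V]
    (L : V →ₗ[ℝ] V)
    (hsym : ∀ x y : V, ⟪L x, y⟫ = ⟪x, L y⟫)
    (hnonneg : ∀ x : V, 0 ≤ ⟪x, L x⟫)
    (τ : ℝ) (hτ : 0 < τ)
    (φn φn1 ωn1 Uφn b : V) (rn rn1 E1 : ℝ) (hE1 : 0 < E1)
    (hb : b = (Real.sqrt E1)⁻¹ • Uφn)
    (h1 : φn1 - φn = -(τ • ωn1))
    (h2 : ωn1 = L φn1 + rn1 • b)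
    (h3 : rn1 - rn = (1 / 2) * ⟪b, φn1 - φn⟫) :
    (((1 / 2) * ⟪φn1, L φn1⟫ + rn1 ^ 2) - ((1 / 2) * ⟪φn, L φn⟫ + rn ^ 2))
      + (1 / 2) * ⟪φn1 - φn, L (φn1 - φn)⟫ + (rn1 - rn) ^ 2
      = -(τ * ⟪ωn1, ωn1⟫) ∧
    (1 / 2) * ⟪φn1, L φn1⟫ + rn1 ^ 2 ≤ (1 / 2) * ⟪φn, L φn⟫ + rn ^ 2 := by
  have hc : ⟪φn, L φn1⟫ = ⟪φn1, L φn⟫ := by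
    rw [← hsym φn φn1, real_inner_comm]
  have hδω : ⟪φn1 - φn, ωn1⟫ = -(τ * ⟪ωn1, ωn1⟫) := by
    rw [h1, inner_neg_left, inner_smul_left]
    simp [RCLike.conj_to_real]
  have hδb : ⟪φn1 - φn, b⟫ = 2 * (rn1 - rn) := by
    rw [real_inner_comm]; linarith [h3]
  have hexp : ⟪φn1 - φn, ωn1⟫
      = ⟪φn1, L φn1⟫ - ⟪φn1, L φn⟫ + rn1 * (2 * (rn1 - rn)) := by
    rw [h2, inner_add_right, inner_smul_right, hδb, inner_sub_left, hc]
  have hLδ : ⟪φn1 - φn, L (φn1 - φn)⟫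
      = ⟪φn1, L φn1⟫ - 2 * ⟪φn1, L φn⟫ + ⟪φn, L φn⟫ := by
    rw [map_sub, inner_sub_right, inner_sub_left, inner_sub_left, hc]
    ring
  have key : (((1 / 2) * ⟪φn1, L φn1⟫ + rn1 ^ 2) - ((1 / 2) * ⟪φn, L φn⟫ + rn ^ 2))
      + (1 / 2) * ⟪φn1 - φn, L (φn1 - φn)⟫ + (rn1 - rn) ^ 2
      = -(τ * ⟪ωn1, ωn1⟫) := by
    rw [hLδ, ← hδω, hexp]; ring
  refine ⟨key, ?_⟩
  have h4 := hnonneg (φn1 - φn)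
  have h5 : 0 ≤ τ * ⟪ωn1, ωn1⟫ :=
    mul_nonneg hτ.le real_inner_self_nonneg
  nlinarith [sq_nonneg (rn1 - rn)]
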